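/- Let F be a field of characteristic zero, and let Q = {Q_1,...,Q_t} ⊆ F[X_1,...,X_N] be polynomials each of degree less than d, with algebraic rank k and B = {Q_1,...,Q_k} a maximal algebraically independent subset. Then there exists a ∈ F^N and, for each i ∈ {k+1,...,t}, a polynomial F_i in at most k(d+1) variables, such that Q_i(X + a) = F_i applied to the tuple of all homogeneous components (h^0, h^1, ..., h^d) of Q_1(X+a), ..., Q_k(X+a). -/

import Mathlib

/-!
Each `Q_i` is algebraic over the algebra `S` generated by the independent `Q_1, …, Q_k`, and in
characteristic zero an annihilating polynomial `P_i ∈ S[Y]` of minimal degree satisfies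
`P_i'(Q_i) ≠ 0`. Choose `a` with `P_i'(Q_i)(a) ≠ 0` for all `i`; after the shift `X ↦ X + a` the
derivative `P_i'(q_i)` has a nonzero constant term. Reading `P_i(q_i) = 0` in degree `m` then
expresses the degree-`m` component of `q_i` through its components of lower degree and the
coefficients of `P_i` (a Newton iteration along the grading), so all components of `q_i` lie in the
algebra generated by the homogeneous components of the shifted `Q_1, …, Q_k`; that algebra is closed
under taking homogeneous components because its generators are homogeneous.
-/

open Finset MvPolynomial
open scoped Polynomial

namespace MvPolynomial

variable {σ R : Type*}

section GradedAlgebra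

attribute [local instance] MvPolynomial.gradedAlgebra

theorem homogeneousComponent_mul [CommSemiring R] (p q : MvPolynomial σ R) (n : ℕ) :
    homogeneousComponent n (p * q) =
      ∑ ij ∈ antidiagonal n, homogeneousComponent ij.1 p * homogeneousComponent ij.2 q := by
  simp only [← decomposition.decompose'_apply]
  rw [← DirectSum.coe_mul_apply_eq_sum_antidiagonal]
  exact congrArg (fun x => (x n : MvPolynomial σ R))
    (DirectSum.decompose_mul (homogeneousSubmodule σ R) p q)

end GradedAlgebra

theorem homogeneousComponent_mul_eq_zero [CommSemiring R] {p q : MvPolynomial σ R} {a b n : ℕ}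
    (hp : ∀ v < a, homogeneousComponent v p = 0) (hq : ∀ v < b, homogeneousComponent v q = 0)
    (hn : n < a + b) : homogeneousComponent n (p * q) = 0 := by
  rw [homogeneousComponent_mul]
  refine sum_eq_zero fun ij hij => ?_
  rw [HasAntidiagonal.mem_antidiagonal] at hij
  rcases lt_or_ge ij.1 a with h | h
  · rw [hp _ h, zero_mul]
  · rw [hq _ (by omega), mul_zero]

theorem homogeneousComponent_mul_of_lt [CommRing R] (p : MvPolynomial σ R) {q : MvPolynomial σ R}
    {m : ℕ} (hq : ∀ v < m, homogeneousComponent v q = 0) :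
    homogeneousComponent m (p * q) = C (constantCoeff p) * homogeneousComponent m q := by
  have hp : ∀ v < 1, homogeneousComponent v (p - C (constantCoeff p)) = 0 := by
    intro v hv
    obtain rfl : v = 0 := by omega
    simp [homogeneousComponent_zero, constantCoeff_eq]
  calc homogeneousComponent m (p * q)
      = homogeneousComponent m ((p - C (constantCoeff p)) * q) +
          homogeneousComponent m (C (constantCoeff p) * q) := by
        rw [← map_add, ← add_mul, sub_add_cancel]
    _ = C (constantCoeff p) * homogeneousComponent m q := by
        rw [homogeneousComponent_mul_eq_zero hp hq (by omega), zero_add,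
          homogeneousComponent_C_mul]

theorem homogeneousComponent_eval_add [CommRing R] (P : (MvPolynomial σ R)[X])
    (x : MvPolynomial σ R) {r : MvPolynomial σ R} {m : ℕ} (hm : 0 < m)
    (hr : ∀ v < m, homogeneousComponent v r = 0) :
    homogeneousComponent m (P.eval (x + r)) =
      homogeneousComponent m (P.eval x) +
        C (constantCoeff (P.derivative.eval x)) * homogeneousComponent m r := by
  obtain ⟨c, hc⟩ := P.binomExpansion x r
  have hr2 : homogeneousComponent m (c * r ^ 2) = 0 :=
    homogeneousComponent_mul_eq_zero (a := 0) (by simp)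
      (fun v hv => by rw [sq]; exact homogeneousComponent_mul_eq_zero hr hr hv) (by omega)
  rw [hc, map_add, map_add, hr2, add_zero, homogeneousComponent_mul_of_lt _ hr]

theorem homogeneousComponent_sum_range [CommSemiring R] (p : MvPolynomial σ R) (m v : ℕ) :
    homogeneousComponent v (∑ n ∈ range m, homogeneousComponent n p) =
      if v < m then homogeneousComponent v p else 0 := by
  simp [homogeneousComponent_of_mem (homogeneousComponent_mem _ p)]

theorem mem_of_forall_homogeneousComponent_mem [CommSemiring R]
    {T : Subalgebra R (MvPolynomial σ R)} {p : MvPolynomial σ R}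
    (hp : ∀ n, homogeneousComponent n p ∈ T) : p ∈ T := by
  rw [← sum_homogeneousComponent p]
  exact T.sum_mem fun n _ => hp n

theorem homogeneousComponent_mem_adjoin [CommSemiring R] {s : Set (MvPolynomial σ R)}
    (hs : ∀ x ∈ s, ∃ n, x.IsHomogeneous n) {p : MvPolynomial σ R}
    (hp : p ∈ Algebra.adjoin R s) (m : ℕ) :
    homogeneousComponent m p ∈ Algebra.adjoin R s := by
  have of_isHomogeneous : ∀ x ∈ Algebra.adjoin R s, ∀ n, x.IsHomogeneous n →
      ∀ m, homogeneousComponent m x ∈ Algebra.adjoin R s := fun x hx n hn m => by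
    rw [homogeneousComponent_of_mem hn]
    split_ifs
    exacts [hx, Subalgebra.zero_mem _]
  induction hp using Algebra.adjoin_induction generalizing m with
  | mem x hx =>
    obtain ⟨n, hn⟩ := hs x hx
    exact of_isHomogeneous x (Algebra.subset_adjoin hx) n hn m
  | algebraMap r =>
    exact of_isHomogeneous _ (Subalgebra.algebraMap_mem _ r) 0 (isHomogeneous_C _ r) m
  | add x y _ _ hx hy => rw [map_add]; exact add_mem (hx m) (hy m)
  | mul x y _ _ hx hy =>
    rw [homogeneousComponent_mul]
    exact Subalgebra.sum_mem _ fun ij _ => Subalgebra.mul_mem _ (hx ij.1) (hy ij.2)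

theorem homogeneousComponent_mem_of_eval_eq_zero {K : Type*} [Field K]
    {T : Subalgebra K (MvPolynomial σ K)} (hT : ∀ p ∈ T, ∀ n, homogeneousComponent n p ∈ T)
    {P : (MvPolynomial σ K)[X]} (hP : ∀ n, P.coeff n ∈ T) {q : MvPolynomial σ K}
    (hq : P.eval q = 0) (hq' : constantCoeff (P.derivative.eval q) ≠ 0) (m : ℕ) :
    homogeneousComponent m q ∈ T := by
  induction m using Nat.strong_induction_on with
  | _ m IH =>
  rcases Nat.eq_zero_or_pos m with rfl | hm
  · rw [homogeneousComponent_zero]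
    exact T.algebraMap_mem _
  set qh := ∑ n ∈ range m, homogeneousComponent n q
  have hqh : qh ∈ T := T.sum_mem fun n hn => IH n (mem_range.mp hn)
  have hPqh : P.eval qh ∈ T := by
    rw [Polynomial.eval_eq_sum_range]
    exact T.sum_mem fun n _ => T.mul_mem (hP n) (T.pow_mem hqh n)
  have hr : ∀ v < m, homogeneousComponent v (q - qh) = 0 := by
    intro v hv
    rw [map_sub, homogeneousComponent_sum_range, if_pos hv, sub_self]
  have hc : constantCoeff (P.derivative.eval qh) ≠ 0 := by
    have h0 : constantCoeff qh = constantCoeff q := by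
      have := homogeneousComponent_sum_range q m 0
      rwa [if_pos hm, homogeneousComponent_zero, homogeneousComponent_zero, ← constantCoeff_eq,
        C_inj] at this
    rwa [← Polynomial.eval_map_apply, h0, Polynomial.eval_map_apply]
  -- degree `m` of `P(qh + (q - qh)) = 0` reads `0 = P(qh)_m + c • q_m`, and `P(qh) ∈ T`
  have key := homogeneousComponent_eval_add P qh hm hr
  rw [add_sub_cancel, hq, map_zero, map_sub, homogeneousComponent_sum_range,
    if_neg (lt_irrefl m), sub_zero] at key
  set c := constantCoeff (P.derivative.eval qh)
  have hinv : (C c⁻¹ * C c : MvPolynomial σ K) = 1 := by rw [← C_mul, inv_mul_cancel₀ hc, C_1]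
  have hsolve : homogeneousComponent m q = -(C c⁻¹ * homogeneousComponent m (P.eval qh)) := by
    linear_combination (-C c⁻¹) * key - homogeneousComponent m q * hinv
  rw [hsolve]
  exact T.neg_mem (T.mul_mem (T.algebraMap_mem _) (hT _ hPqh m))

theorem mem_of_eval_eq_zero {K : Type*} [Field K]
    {T : Subalgebra K (MvPolynomial σ K)} (hT : ∀ p ∈ T, ∀ n, homogeneousComponent n p ∈ T)
    {P : (MvPolynomial σ K)[X]} (hP : ∀ n, P.coeff n ∈ T) {q : MvPolynomial σ K}
    (hq : P.eval q = 0) (hq' : constantCoeff (P.derivative.eval q) ≠ 0) : q ∈ T :=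
  mem_of_forall_homogeneousComponent_mem (homogeneousComponent_mem_of_eval_eq_zero hT hP hq hq')

theorem adjoin_range_le_adjoin_homogeneousComponent [CommSemiring R] {ι : Type*}
    {f : ι → MvPolynomial σ R} {d : ℕ} (hf : ∀ i, (f i).totalDegree ≤ d) :
    Algebra.adjoin R (Set.range f) ≤ Algebra.adjoin R
      (Set.range fun p : ι × Fin (d + 1) => homogeneousComponent p.2 (f p.1)) := by
  refine Algebra.adjoin_le (Set.range_subset_iff.mpr fun i =>
    mem_of_forall_homogeneousComponent_mem fun n => ?_)
  rcases lt_or_ge n (d + 1) with hn | hn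
  · exact Algebra.subset_adjoin ⟨(i, ⟨n, hn⟩), rfl⟩
  · rw [homogeneousComponent_eq_zero _ _ ((hf i).trans_lt hn)]
    exact Subalgebra.zero_mem _

theorem totalDegree_aeval_le [CommSemiring R] {τ : Type*} {f : σ → MvPolynomial τ R}
    (hf : ∀ i, (f i).totalDegree ≤ 1) (p : MvPolynomial σ R) :
    (aeval f p).totalDegree ≤ p.totalDegree := by
  rw [aeval_def, eval₂_eq]
  refine totalDegree_finsetSum_le fun u hu => ?_
  calc (C (coeff u p) * ∏ i ∈ u.support, f i ^ u i).totalDegree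
      ≤ (∏ i ∈ u.support, f i ^ u i).totalDegree := by
        simpa using totalDegree_mul (C (coeff u p)) _
    _ ≤ ∑ i ∈ u.support, u i * 1 := by
        refine (totalDegree_finsetProd _ _).trans (sum_le_sum fun i _ => ?_)
        exact (totalDegree_pow _ _).trans (Nat.mul_le_mul_left _ (hf i))
    _ ≤ p.totalDegree := by simpa [Finsupp.sum] using le_totalDegree hu

theorem totalDegree_X_add_C_le [CommSemiring R] (i : σ) (a : R) :
    (X i + C a : MvPolynomial σ R).totalDegree ≤ 1 :=
  (totalDegree_add _ _).trans <|
    max_le ((totalDegree_monomial_le (Finsupp.single i 1) 1).trans (by simp)) (by simp)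

theorem constantCoeff_aeval_X_add_C [CommSemiring R] (a : σ → R) (p : MvPolynomial σ R) :
    constantCoeff (aeval (fun i => X i + C (a i)) p) = eval a p := by
  induction p using MvPolynomial.induction_on <;> simp_all

theorem aeval_X_add_C_mem_of_aeval_eq_zero {K : Type*} [Field K]
    {S T : Subalgebra K (MvPolynomial σ K)} (hT : ∀ p ∈ T, ∀ n, homogeneousComponent n p ∈ T)
    (a : σ → K) (hST : S.map (aeval fun i => X i + C (a i)) ≤ T) {P : S[X]}
    {x : MvPolynomial σ K} (hP : Polynomial.aeval x P = 0)
    (hP' : eval a (Polynomial.aeval x (Polynomial.derivative P)) ≠ 0) :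
    aeval (fun i => X i + C (a i)) x ∈ T := by
  set τ : MvPolynomial σ K →ₐ[K] MvPolynomial σ K := aeval fun i => X i + C (a i)
  have hτ (p : S[X]) :
      ((p.map (algebraMap S _)).map τ.toRingHom).eval (τ x) = τ (Polynomial.aeval x p) := by
    rw [← Polynomial.eval_map_algebraMap]
    exact Polynomial.eval_map_apply τ.toRingHom x
  refine mem_of_eval_eq_zero hT (P := (P.map (algebraMap S _)).map τ.toRingHom)
    (fun n => ?_) ?_ ?_
  · rw [Polynomial.coeff_map, Polynomial.coeff_map]
    exact hST ⟨_, (P.coeff n).2, rfl⟩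
  · rw [hτ, hP, map_zero]
  · rwa [Polynomial.derivative_map, Polynomial.derivative_map, hτ, constantCoeff_aeval_X_add_C]

theorem exists_forall_eval_ne_zero [CommRing R] [IsDomain R] [Infinite R] {ι : Type*} [Fintype ι]
    {f : ι → MvPolynomial σ R} (hf : ∀ i, f i ≠ 0) : ∃ a, ∀ i, eval a (f i) ≠ 0 := by
  have hprod : ∏ i, f i ≠ 0 := prod_ne_zero_iff.mpr fun i _ => hf i
  contrapose! hprod
  refine MvPolynomial.funext fun a => ?_
  obtain ⟨i, hi⟩ := hprod a
  rw [map_prod, map_zero]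
  exact prod_eq_zero (mem_univ i) hi

end MvPolynomial

theorem IsAlgebraic.exists_aeval_eq_zero_aeval_derivative_ne_zero {R A : Type*} [CommRing R]
    [IsAddTorsionFree R] [CommRing A] [Algebra R A] [FaithfulSMul R A] {x : A}
    (hx : IsAlgebraic R x) :
    ∃ p : R[X], Polynomial.aeval x p = 0 ∧ Polynomial.aeval x (Polynomial.derivative p) ≠ 0 := by
  obtain ⟨p, hp0, hp⟩ := hx
  induction h : p.natDegree using Nat.strong_induction_on generalizing p with
  | _ n IH =>
  by_cases hd : Polynomial.aeval x (Polynomial.derivative p) = 0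
  · have hn : p.natDegree ≠ 0 := by
      intro h0
      rw [Polynomial.eq_C_of_natDegree_eq_zero h0, Polynomial.aeval_C,
        FaithfulSMul.algebraMap_eq_zero_iff] at hp
      exact hp0 (by rw [Polynomial.eq_C_of_natDegree_eq_zero h0, hp, Polynomial.C_0])
    exact IH _ (h ▸ Polynomial.natDegree_derivative_lt hn) _
      (Polynomial.derivative_ne_zero.mpr hn) hd rfl
  · exact ⟨p, hp, hd⟩

/-- Functional dependence without truncation: if `{Q_1, …, Q_t}` are
polynomials of degree less than `d` with algebraic rank `k` and maximal
algebraically independent subset `{Q_1, …, Q_k}`, then there is a translation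
`a ∈ F^N` and, for each `i > k`, a polynomial `F_i` in `k(d+1)` variables such
that `Q_i(X+a)` equals `F_i` applied to the tuple of all homogeneous components
`h^0, …, h^d` of `Q_1(X+a), …, Q_k(X+a)`. -/
theorem functional_dependence_on_homogeneous_components {F : Type*} [Field F]
    [CharZero F] {N t k d : ℕ} (hk : k ≤ t) (Q : Fin t → MvPolynomial (Fin N) F)
    (hdeg : ∀ i, (Q i).totalDegree < d)
    (hindep : ∀ R : MvPolynomial (Fin k) F,
      MvPolynomial.aeval (fun j : Fin k => Q (Fin.castLE hk j)) R = 0 → R = 0)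
    (hmax : ∀ i : Fin t, ∃ A : MvPolynomial (Option (Fin k)) F, A ≠ 0 ∧
      MvPolynomial.aeval (fun o : Option (Fin k) =>
        o.elim (Q i) (fun j => Q (Fin.castLE hk j))) A = 0) :
    ∃ a : Fin N → F, ∃ Fi : Fin t → MvPolynomial (Fin k × Fin (d + 1)) F,
      ∀ i : Fin t, k ≤ (i : ℕ) →
        MvPolynomial.aeval (fun m : Fin N =>
            MvPolynomial.X m + MvPolynomial.C (a m)) (Q i) =
          MvPolynomial.aeval (fun p : Fin k × Fin (d + 1) =>
            MvPolynomial.homogeneousComponent (p.2 : ℕ)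
              (MvPolynomial.aeval (fun m : Fin N =>
                MvPolynomial.X m + MvPolynomial.C (a m)) (Q (Fin.castLE hk p.1))))
            (Fi i) := by
  set Qs : Fin k → MvPolynomial (Fin N) F := fun j => Q (Fin.castLE hk j)
  have hQs : AlgebraicIndependent F Qs := algebraicIndependent_iff.mpr hindep
  have halg : ∀ i, IsAlgebraic (Algebra.adjoin F (Set.range Qs)) (Q i) := fun i => by
    by_contra h
    obtain ⟨A, hA0, hA⟩ := hmax i
    exact hA0 (((hQs.option_iff_transcendental (Q i)).mpr h).eq_zero_of_aeval_eq_zero A hA)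
  choose P hP hP' using fun i => (halg i).exists_aeval_eq_zero_aeval_derivative_ne_zero
  obtain ⟨a, ha⟩ := exists_forall_eval_ne_zero hP'
  set τ : MvPolynomial (Fin N) F →ₐ[F] MvPolynomial (Fin N) F := aeval fun m => X m + C (a m)
  have hST : (Algebra.adjoin F (Set.range Qs)).map τ ≤ Algebra.adjoin F
      (Set.range fun p : Fin k × Fin (d + 1) => homogeneousComponent p.2 (τ (Qs p.1))) := by
    rw [AlgHom.map_adjoin, ← Set.range_comp]
    exact adjoin_range_le_adjoin_homogeneousComponent fun j =>
      (totalDegree_aeval_le (fun m => totalDegree_X_add_C_le m (a m)) _).trans (hdeg _).le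
  have hmem : ∀ i, τ (Q i) ∈ _ := fun i =>
    aeval_X_add_C_mem_of_aeval_eq_zero (fun p hp => homogeneousComponent_mem_adjoin
      (by rintro _ ⟨j, rfl⟩; exact ⟨_, homogeneousComponent_isHomogeneous _ _⟩) hp) a hST
      (hP i) (ha i)
  simp only [Algebra.adjoin_range_eq_range_aeval, AlgHom.mem_range] at hmem
  choose Fi hFi using hmem
  exact ⟨a, Fi, fun i _ => (hFi i).symm⟩
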